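/- Let A generate an α-times resolvent family {S_α(t)}_{t≥0} on X, where 1 < α < 2, and let P_α(t)x = ∫_0^t g_{α−1}(t−s)S_α(s)x ds. Then for every x ∈ X and all 0 ≤ a ≤ b ≤ t, the element ∫_a^b s P_α(t−s)x ds belongs to D(A) and A(∫_a^b s P_α(t−s)x ds) = a S_α(t−a)x − b S_α(t−b)x + ∫_a^b S_α(t−s)x ds. -/

import Mathlib

open MeasureTheory Set

/-- `g β t = t^(β-1)/Γ(β)`. -/
noncomputable def g (β t : ℝ) : ℝ := t ^ (β - 1) / Real.Gamma β

/-- `Pa α S t x = (g_{α-1} * S)(t) x = ∫_0^t g_{α-1}(t-s) S(s) x ds`. -/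
noncomputable def Pa {X : Type*} [NormedAddCommGroup X] [NormedSpace ℂ X]
    (α : ℝ) (S : ℝ → X →L[ℂ] X) (t : ℝ) (x : X) : X :=
  ∫ s in (0:ℝ)..t, g (α - 1) (t - s) • S s x

/-!
For `x ∈ D(A)`, Fubini and `g_{α-1} * 1 = g_α` turn the defining equation of the resolvent family
into `S(τ)x = x + ∫_0^τ P_α(σ)Ax dσ`, so `S(·)x` has derivative `P_α(·)Ax`. Integrating
`s S(t-s)x` by parts gives the identity with `∫_a^b s P_α(t-s)Ax ds` on the left, and as `A` is
closed and commutes with `S`, hence with `P_α` and with the integral, this is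
`A ∫_a^b s P_α(t-s)x ds`.
Both sides depend continuously on `x` (Banach–Steinhaus bounds `S` on `[0, t]`), so closedness of
`A` and density of `D(A)` give the statement for all `x`.
-/

open Filter Topology intervalIntegral
open scoped Interval

theorem g_nonneg {β s : ℝ} (hβ : 0 < β) (hs : 0 ≤ s) : 0 ≤ g β s :=
  div_nonneg (Real.rpow_nonneg hs _) (Real.Gamma_pos_of_pos hβ).le

theorem g_monotoneOn {β : ℝ} (hβ : 1 ≤ β) : MonotoneOn (g β) (Ici 0) := fun _ hs _ _ hsτ =>
  div_le_div_of_nonneg_right (Real.rpow_le_rpow hs hsτ (by linarith))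
    (Real.Gamma_pos_of_pos (by linarith)).le

theorem intervalIntegrable_g {β : ℝ} (hβ : 0 < β) (a b : ℝ) :
    IntervalIntegrable (g β) volume a b :=
  (intervalIntegrable_rpow' (by linarith : -1 < β - 1)).div_const _

theorem integral_g {β : ℝ} (hβ : 0 < β) (τ : ℝ) :
    ∫ s in (0:ℝ)..τ, g β s = g (β + 1) τ := by
  simp only [g, intervalIntegral.integral_div, add_sub_cancel_right]
  rw [integral_rpow (Or.inl (by linarith)), sub_add_cancel, Real.zero_rpow hβ.ne',
    Real.Gamma_add_one hβ.ne', sub_zero]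
  field_simp [(Real.Gamma_pos_of_pos hβ).ne']

theorem integral_mem_of_isClosed {ι E : Type*} [MeasurableSpace ι] {μ : Measure ι}
    [NormedAddCommGroup E] [NormedSpace ℝ E] [CompleteSpace E]
    {p : Submodule ℝ E} (hp : IsClosed (p : Set E)) {f : ι → E} (hf : Integrable f μ)
    (hmem : ∀ᵐ x ∂μ, f x ∈ p) : ∫ x, f x ∂μ ∈ p := by
  have : IsClosed (p : Set E) := hp
  -- The quotient map onto `E ⧸ p` commutes with the integral and kills the integrand.
  rw [← Submodule.Quotient.mk_eq_zero]
  have hcomm := p.mkQL.integral_comp_comm hf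
  simp only [Submodule.mkQL_apply, Submodule.mkQ_apply] at hcomm
  rw [← hcomm]
  exact integral_eq_zero_of_ae (hmem.mono fun x hx => (Submodule.Quotient.mk_eq_zero p).2 hx)

theorem LinearPMap.intervalIntegral_mem_graph {R E F : Type*} [Ring R] [SMul ℝ R]
    [NormedAddCommGroup E] [NormedSpace ℝ E] [CompleteSpace E] [Module R E] [IsScalarTower ℝ R E]
    [NormedAddCommGroup F] [NormedSpace ℝ F] [CompleteSpace F] [Module R F] [IsScalarTower ℝ R F]
    {A : E →ₗ.[R] F} (hA : _root_.IsClosed (A.graph : Set (E × F))) {f : ℝ → E} {h : ℝ → F}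
    {a b : ℝ} (hf : IntervalIntegrable f volume a b) (hh : IntervalIntegrable h volume a b)
    (hmem : ∀ s ∈ Ι a b, (f s, h s) ∈ A.graph) :
    ((∫ s in a..b, f s), ∫ s in a..b, h s) ∈ A.graph := by
  simp only [intervalIntegral_eq_integral_uIoc]
  rw [← Prod.smul_mk, ← integral_pair hf.def' hh.def']
  exact (A.graph.restrictScalars ℝ).smul_mem _ <| integral_mem_of_isClosed hA
    (hf.def'.prodMk hh.def') (ae_restrict_of_forall_mem measurableSet_uIoc hmem)

theorem IsCompact.exists_forall_opNorm_le {ι 𝕜 E F : Type*} [TopologicalSpace ι]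
    [NontriviallyNormedField 𝕜] [NormedAddCommGroup E] [NormedSpace 𝕜 E] [CompleteSpace E]
    [NormedAddCommGroup F] [NormedSpace 𝕜 F] {K : Set ι} (hK : IsCompact K)
    {T : ι → E →L[𝕜] F} (hT : ∀ x, ContinuousOn (fun s => T s x) K) :
    ∃ M, ∀ s ∈ K, ‖T s‖ ≤ M := by
  obtain ⟨M, hM⟩ := banach_steinhaus (g := fun s : K => T s) fun x =>
    (hK.exists_bound_of_continuousOn (hT x)).imp fun C hC s => hC s s.2
  exact ⟨M, fun s hs => hM ⟨s, hs⟩⟩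

theorem continuous_intervalIntegral_of_norm_sub_le {E F : Type*} [NormedAddCommGroup E]
    [NormedAddCommGroup F] [NormedSpace ℝ F] {f : ℝ → E → F} {a b C : ℝ}
    (hf : ∀ x, IntervalIntegrable (fun s => f s x) volume a b)
    (hC : ∀ s ∈ Ι a b, ∀ x y, ‖f s x - f s y‖ ≤ C * ‖x - y‖) :
    Continuous fun x => ∫ s in a..b, f s x := by
  refine (LipschitzWith.of_dist_le' (K := C * |b - a|) fun x y => ?_).continuous
  rw [dist_eq_norm, dist_eq_norm, ← integral_sub (hf x) (hf y), mul_right_comm]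
  exact norm_integral_le_of_norm_le_const fun s hs => hC s hs x y

theorem integral_smul_comp_sub_eq {E : Type*} [NormedAddCommGroup E] [NormedSpace ℝ E]
    [CompleteSpace E] {F p : ℝ → E} {a b t : ℝ} (hab : a ≤ b)
    (hF : ContinuousOn F (Icc (t - b) (t - a)))
    (hFp : ∀ τ ∈ Ioo (t - b) (t - a), HasDerivAt F (p τ) τ)
    (hp : ContinuousOn p (Icc (t - b) (t - a))) :
    ∫ s in a..b, s • p (t - s) = a • F (t - a) - b • F (t - b) + ∫ s in a..b, F (t - s) := by
  have hmaps : MapsTo (fun s => t - s) [[a, b]] (Icc (t - b) (t - a)) := by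
    intro s hs
    rw [uIcc_of_le hab] at hs
    exact ⟨by linarith [hs.2], by linarith [hs.1]⟩
  have hsub : ContinuousOn (fun s : ℝ => t - s) [[a, b]] := by fun_prop
  have parts := integral_smul_deriv_eq_deriv_smul_of_hasDerivAt (u := id) (u' := fun _ => (1:ℝ))
    (v := fun s => F (t - s)) (v' := fun s => -p (t - s)) continuousOn_id (hF.comp hsub hmaps)
    (fun s _ => hasDerivAt_id s) (fun s hs => ?_) intervalIntegrable_const
    (hp.comp hsub hmaps).neg.intervalIntegrable
  · simp only [id, smul_neg, one_smul, intervalIntegral.integral_neg] at parts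
    rw [← neg_neg (∫ s in a..b, s • p (t - s)), parts]
    abel
  · rw [min_eq_left hab, max_eq_right hab] at hs
    simpa [Function.comp_def] using
      (hFp (t - s) ⟨by linarith [hs.2], by linarith [hs.1]⟩).scomp s ((hasDerivAt_id s).const_sub t)

theorem continuousOn_integral_kernel_smul {E : Type*} [NormedAddCommGroup E] [NormedSpace ℝ E]
    {k : ℝ → ℝ} {W : ℝ → E}
    (hk : ∀ c d, IntervalIntegrable k volume c d) (hW : ContinuousOn W (Ici 0)) :
    ContinuousOn (fun τ => ∫ u in (0:ℝ)..τ, k (τ - u) • W u) (Ici 0) := by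
  intro τ₀ (hτ₀ : 0 ≤ τ₀)
  obtain ⟨T, hT⟩ : ∃ T, τ₀ < T := ⟨τ₀ + 1, by linarith⟩
  set W' : ℝ → E := fun σ => W (max σ 0)
  have hW' : Continuous W' :=
    hW.comp_continuous (continuous_id.max continuous_const) fun σ => le_max_right σ 0
  obtain ⟨C, hC⟩ :=
    isCompact_Icc.exists_bound_of_continuousOn (hW.mono (Icc_subset_Ici_self : Icc 0 T ⊆ _))
  -- After substituting `v = τ - u`, the integrand is continuous in `τ` except at `τ = v`,
  -- so dominated convergence applies.
  set F : ℝ → ℝ → E := fun τ => {v | v ≤ τ}.indicator fun v => k v • W' (τ - v)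
  have hF : ∀ τ ∈ Icc 0 T, ∫ u in (0:ℝ)..τ, k (τ - u) • W u = ∫ v in (0:ℝ)..T, F τ v := by
    intro τ hτ
    have hsub := integral_comp_sub_left (fun v => k v • W' (τ - v)) τ (a := 0) (b := τ)
    rw [sub_self, sub_zero] at hsub
    rw [integral_indicator hτ, ← hsub]
    refine integral_congr fun u hu => ?_
    rw [uIcc_of_le hτ.1] at hu
    simp [W', max_eq_left hu.1]
  have hcont : ContinuousAt (fun τ => ∫ v in (0:ℝ)..T, F τ v) τ₀ := by
    refine continuousAt_of_dominated_interval (bound := fun v => ‖k v‖ * C) ?_ ?_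
      ((hk 0 T).norm.mul_const C) ?_
    · exact Eventually.of_forall fun τ =>
        ((intervalIntegrable_iff.1 (hk 0 T)).aestronglyMeasurable.smul
          (hW'.comp (continuous_const.sub continuous_id)).aestronglyMeasurable).indicator
          measurableSet_Iic
    · filter_upwards [Iio_mem_nhds hT] with τ (hτ : τ < T)
      refine Eventually.of_forall fun v hv => (norm_indicator_le_norm_self _ _).trans ?_
      rw [uIoc_of_le (by linarith)] at hv
      rw [norm_smul]
      exact mul_le_mul_of_nonneg_left
        (hC _ ⟨le_max_right _ _, max_le (by linarith [hv.1]) (by linarith)⟩) (norm_nonneg _)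
    · filter_upwards [Measure.ae_ne volume τ₀] with v hv _
      rcases hv.lt_or_gt with hlt | hgt
      · refine ((hW'.comp (continuous_sub_right v)).const_smul (k v)).continuousAt.congr ?_
        filter_upwards [Ioi_mem_nhds hlt] with τ hτ
        exact (indicator_of_mem (show v ≤ τ from hτ.le) _).symm
      · refine (continuousAt_const (y := (0 : E))).congr ?_
        filter_upwards [Iio_mem_nhds hgt] with τ (hτ : τ < v)
        simp [F, not_le.2 hτ]
  refine hcont.continuousWithinAt.congr_of_eventuallyEq ?_ (hF τ₀ ⟨hτ₀, hT.le⟩)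
  filter_upwards [self_mem_nhdsWithin, nhdsWithin_le_nhds (Iio_mem_nhds hT)] with τ h0 h1
  exact hF τ ⟨h0, le_of_lt h1⟩

theorem integral_indicator_Ici {E : Type*} [NormedAddCommGroup E] [NormedSpace ℝ E]
    {f : ℝ → E} {a₁ a₂ a₃ : ℝ} (h₁ : a₁ < a₂) (h₂ : a₂ ≤ a₃) :
    ∫ x in a₁..a₃, (Ici a₂).indicator f x = ∫ x in a₂..a₃, f x := by
  have hset : Ici a₂ ∩ Ioc a₁ a₃ = Icc a₂ a₃ := by
    ext x
    simp only [mem_inter_iff, mem_Ici, mem_Ioc, mem_Icc]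
    exact ⟨fun h => ⟨h.1, h.2.2⟩, fun h => ⟨h.1, h₁.trans_le h.1, h.2⟩⟩
  rw [integral_of_le (h₁.le.trans h₂), MeasureTheory.integral_indicator measurableSet_Ici,
    Measure.restrict_restrict measurableSet_Ici, hset, integral_Icc_eq_integral_Ioc,
    integral_of_le h₂]

theorem integrableOn_indicator_kernel_smul {E : Type*} [NormedAddCommGroup E]
    [NormedSpace ℝ E] {k : ℝ → ℝ} {W : ℝ → E} {τ : ℝ}
    (hk : IntervalIntegrable k volume (-τ) τ) (hW : ContinuousOn W (Icc 0 τ)) :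
    IntegrableOn (fun p : ℝ × ℝ => {u | u ≤ p.1}.indicator (fun u => k (p.1 - u) • W u) p.2)
      (Ioc 0 τ ×ˢ Ioc 0 τ) := by
  have hconv := Integrable.convolution_integrand (ContinuousLinearMap.lsmul ℝ ℝ).flip
    ((hW.integrableOn_Icc.mono_set Ioc_subset_Icc_self).integrable_indicator measurableSet_Ioc)
    (hk.1.integrable_indicator measurableSet_Ioc) (μ := volume) (ν := volume)
  rw [← Measure.volume_eq_prod] at hconv
  refine (hconv.indicator (measurableSet_le measurable_snd measurable_fst)).integrableOn.congr_fun
    (fun p ⟨⟨h1, h2⟩, ⟨h3, h4⟩⟩ => ?_) (measurableSet_Ioc.prod measurableSet_Ioc)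
  by_cases h : p.2 ≤ p.1
  · simp [h, indicator_of_mem (show p.2 ∈ Ioc 0 τ from ⟨h3, h4⟩),
      indicator_of_mem (show p.1 - p.2 ∈ Ioc (-τ) τ from ⟨by linarith, by linarith⟩)]
  · simp [h]

theorem integral_integral_kernel_smul {E : Type*} [NormedAddCommGroup E] [NormedSpace ℝ E]
    [CompleteSpace E] {k : ℝ → ℝ} {W : ℝ → E} {τ : ℝ}
    (hk : ∀ c d, IntervalIntegrable k volume c d) (hW : ContinuousOn W (Icc 0 τ)) (hτ : 0 ≤ τ) :
    ∫ σ in (0:ℝ)..τ, ∫ u in (0:ℝ)..σ, k (σ - u) • W u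
      = ∫ u in (0:ℝ)..τ, (∫ r in (0:ℝ)..τ - u, k r) • W u := by
  set F : ℝ → ℝ → E := fun σ => {u | u ≤ σ}.indicator fun u => k (σ - u) • W u
  have hF : IntegrableOn (Function.uncurry F) (Ι 0 τ ×ˢ Ι 0 τ) := by
    rw [uIoc_of_le hτ]
    exact integrableOn_indicator_kernel_smul (hk _ _) hW
  calc ∫ σ in (0:ℝ)..τ, ∫ u in (0:ℝ)..σ, k (σ - u) • W u
      = ∫ σ in (0:ℝ)..τ, ∫ u in (0:ℝ)..τ, F σ u := by
        refine integral_congr fun σ hσ => (intervalIntegral.integral_indicator ?_).symm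
        rwa [uIcc_of_le hτ] at hσ
    _ = ∫ u in (0:ℝ)..τ, ∫ σ in (0:ℝ)..τ, F σ u := intervalIntegral_intervalIntegral_swap hF
    _ = ∫ u in (0:ℝ)..τ, (∫ r in (0:ℝ)..τ - u, k r) • W u := by
        refine integral_congr_ae (ae_of_all _ fun u hu => ?_)
        rw [uIoc_of_le hτ] at hu
        have hFu : (fun σ => F σ u) = fun σ => (Ici u).indicator (fun σ => k (σ - u)) σ • W u := by
          ext σ
          by_cases h : u ≤ σ <;> simp [F, h]
        rw [hFu, intervalIntegral.integral_smul_const, integral_indicator_Ici hu.1 hu.2,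
          integral_comp_sub_right, sub_self]

theorem ContinuousOn.comp_const_sub {E : Type*} [TopologicalSpace E] {f : ℝ → E}
    (hf : ContinuousOn f (Ici 0)) {a b t : ℝ} (hab : a ≤ b) (hbt : b ≤ t) :
    ContinuousOn (fun s => f (t - s)) [[a, b]] :=
  hf.comp (continuousOn_const.sub continuousOn_id) fun s hs => by
    rw [uIcc_of_le hab] at hs
    exact mem_Ici.2 (by linarith [hs.2])

section ResolventFamily

variable {X : Type*} [NormedAddCommGroup X] [NormedSpace ℂ X] {α : ℝ} {S : ℝ → X →L[ℂ] X}

theorem intervalIntegrable_Pa_integrand (hα : 1 < α)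
    (hS : ∀ x, ContinuousOn (fun t => S t x) (Ici 0)) {τ : ℝ} (hτ : 0 ≤ τ) (x : X) :
    IntervalIntegrable (fun u => g (α - 1) (τ - u) • S u x) volume 0 τ := by
  refine IntervalIntegrable.smul_continuousOn ?_ ((hS x).mono ?_)
  · simpa using (intervalIntegrable_g (by linarith) τ 0).comp_sub_left τ
  · rw [uIcc_of_le hτ]
    exact Icc_subset_Ici_self

theorem continuousOn_Pa (hα : 1 < α) (hS : ∀ x, ContinuousOn (fun t => S t x) (Ici 0)) (x : X) :
    ContinuousOn (fun τ => Pa α S τ x) (Ici 0) :=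
  continuousOn_integral_kernel_smul (intervalIntegrable_g (by linarith)) (hS x)

theorem integral_Pa [CompleteSpace X] (hα : 1 < α)
    (hS : ∀ x, ContinuousOn (fun t => S t x) (Ici 0)) {τ : ℝ} (hτ : 0 ≤ τ) (x : X) :
    ∫ σ in (0:ℝ)..τ, Pa α S σ x = ∫ s in (0:ℝ)..τ, g α (τ - s) • S s x := by
  simp only [Pa]
  rw [integral_integral_kernel_smul (intervalIntegrable_g (by linarith))
    ((hS x).mono Icc_subset_Ici_self) hτ]
  simp only [integral_g (by linarith : 0 < α - 1), sub_add_cancel]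

theorem Pa_sub (hα : 1 < α) (hS : ∀ x, ContinuousOn (fun t => S t x) (Ici 0)) {τ : ℝ}
    (hτ : 0 ≤ τ) (x y : X) : Pa α S τ (x - y) = Pa α S τ x - Pa α S τ y := by
  simp only [Pa, map_sub, smul_sub]
  exact integral_sub (intervalIntegrable_Pa_integrand hα hS hτ x)
    (intervalIntegrable_Pa_integrand hα hS hτ y)

theorem norm_Pa_le (hα : 1 < α) {τ M : ℝ} (hτ : 0 ≤ τ) (hM : ∀ σ ∈ Icc 0 τ, ‖S σ‖ ≤ M)
    (x : X) : ‖Pa α S τ x‖ ≤ g α τ * (M * ‖x‖) := by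
  have hβ : 0 < α - 1 := by linarith
  have hg : IntervalIntegrable (fun u => g (α - 1) (τ - u)) volume 0 τ := by
    simpa using (intervalIntegrable_g hβ τ 0).comp_sub_left τ
  calc ‖Pa α S τ x‖ ≤ ∫ u in (0:ℝ)..τ, g (α - 1) (τ - u) * (M * ‖x‖) := by
        refine norm_integral_le_of_norm_le hτ (ae_of_all _ fun u hu => ?_) (hg.mul_const _)
        have hgu := g_nonneg hβ (sub_nonneg.2 hu.2)
        rw [norm_smul, Real.norm_of_nonneg hgu]
        exact mul_le_mul_of_nonneg_left
          ((S u).le_of_opNorm_le (hM u ⟨hu.1.le, hu.2⟩) x) hgu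
    _ = g α τ * (M * ‖x‖) := by
        rw [intervalIntegral.integral_mul_const, intervalIntegral.integral_comp_sub_left,
          sub_self, sub_zero, integral_g hβ, sub_add_cancel]

theorem hasDerivAt_of_eq_add_integral [CompleteSpace X] (hα : 1 < α)
    (hS : ∀ x, ContinuousOn (fun t => S t x) (Ici 0)) {x y : X}
    (hxy : ∀ τ, 0 ≤ τ → S τ x = x + ∫ s in (0:ℝ)..τ, g α (τ - s) • S s y) {τ : ℝ} (hτ : 0 < τ) :
    HasDerivAt (fun σ => S σ x) (Pa α S τ y) τ := by
  have hP := continuousOn_Pa hα hS y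
  have hFTC : HasDerivAt (fun σ => x + ∫ r in (0:ℝ)..σ, Pa α S r y) (Pa α S τ y) τ :=
    (integral_hasDerivAt_right
      ((hP.mono (uIcc_of_le hτ.le ▸ Icc_subset_Ici_self)).intervalIntegrable)
      ((hP.mono Ioi_subset_Ici_self).stronglyMeasurableAtFilter isOpen_Ioi τ hτ)
      (hP.continuousAt (Ici_mem_nhds hτ))).const_add x
  refine hFTC.congr_of_eventuallyEq ?_
  filter_upwards [Ioi_mem_nhds hτ] with σ (hσ : 0 < σ)
  rw [hxy σ hσ.le, integral_Pa hα hS hσ.le]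

theorem Pa_mem_graph [CompleteSpace X] (hα : 1 < α)
    (hS : ∀ x, ContinuousOn (fun t => S t x) (Ici 0))
    {A : X →ₗ.[ℂ] X} (hA : IsClosed (A.graph : Set (X × X)))
    (hSA : ∀ t : ℝ, 0 ≤ t → ∀ x y : X, (x, y) ∈ A.graph → (S t x, S t y) ∈ A.graph)
    {x y : X} (hxy : (x, y) ∈ A.graph) {τ : ℝ} (hτ : 0 ≤ τ) :
    (Pa α S τ x, Pa α S τ y) ∈ A.graph := by
  refine A.intervalIntegral_mem_graph hA (intervalIntegrable_Pa_integrand hα hS hτ x)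
    (intervalIntegrable_Pa_integrand hα hS hτ y) fun u hu => ?_
  rw [uIoc_of_le hτ] at hu
  exact A.graph.smul_of_tower_mem (g (α - 1) (τ - u)) (hSA u hu.1.le x y hxy)

theorem continuous_integral_smul_Pa [CompleteSpace X] (hα : 1 < α)
    (hS : ∀ x, ContinuousOn (fun t => S t x) (Ici 0)) {a b t : ℝ} (hab : a ≤ b) (hbt : b ≤ t) :
    Continuous fun x => ∫ s in a..b, s • Pa α S (t - s) x := by
  obtain ⟨M, hM⟩ := isCompact_Icc.exists_forall_opNorm_le fun x =>
    (hS x).mono (Icc_subset_Ici_self : Icc 0 (t - a) ⊆ _)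
  have hM0 : 0 ≤ M := (norm_nonneg _).trans (hM 0 ⟨le_rfl, by linarith⟩)
  refine continuous_intervalIntegral_of_norm_sub_le (C := max |a| |b| * (g α (t - a) * M))
    (fun x => (continuousOn_id.smul
      ((continuousOn_Pa hα hS x).comp_const_sub hab hbt)).intervalIntegrable)
    fun s hs x y => ?_
  rw [uIoc_of_le hab] at hs
  have hts : 0 ≤ t - s := by linarith [hs.2]
  rw [← smul_sub, ← Pa_sub hα hS hts, norm_smul, Real.norm_eq_abs]
  calc |s| * ‖Pa α S (t - s) (x - y)‖ ≤ max |a| |b| * (g α (t - a) * (M * ‖x - y‖)) := by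
        refine mul_le_mul (abs_le_max_abs_abs hs.1.le hs.2) ?_ (norm_nonneg _) (by positivity)
        refine (norm_Pa_le hα hts (fun σ hσ => hM σ ⟨hσ.1, by linarith [hσ.2, hs.1]⟩) _).trans ?_
        exact mul_le_mul_of_nonneg_right
          (g_monotoneOn hα.le hts (by simp; linarith [hs.1]) (by linarith [hs.1])) (by positivity)
    _ = max |a| |b| * (g α (t - a) * M) * ‖x - y‖ := by ring

theorem continuous_integral_apply_comp_sub [CompleteSpace X]
    (hS : ∀ x, ContinuousOn (fun t => S t x) (Ici 0)) {a b t : ℝ} (hab : a ≤ b) (hbt : b ≤ t) :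
    Continuous fun x => ∫ s in a..b, S (t - s) x := by
  obtain ⟨M, hM⟩ := isCompact_Icc.exists_forall_opNorm_le fun x =>
    (hS x).mono (fun σ (hσ : σ ∈ Icc (t - b) (t - a)) => mem_Ici.2 (by linarith [hσ.1]))
  refine continuous_intervalIntegral_of_norm_sub_le (C := M)
    (fun x => ((hS x).comp_const_sub hab hbt).intervalIntegrable) fun s hs x y => ?_
  rw [uIoc_of_le hab] at hs
  rw [← map_sub]
  exact (S (t - s)).le_of_opNorm_le (hM _ ⟨by linarith [hs.2], by linarith [hs.1]⟩) _

theorem integral_smul_Pa_mem_graph [CompleteSpace X] (hα : 1 < α)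
    (hS : ∀ x, ContinuousOn (fun t => S t x) (Ici 0))
    {A : X →ₗ.[ℂ] X} (hA : IsClosed (A.graph : Set (X × X)))
    (hSA : ∀ t : ℝ, 0 ≤ t → ∀ x y : X, (x, y) ∈ A.graph → (S t x, S t y) ∈ A.graph)
    {x y : X} (hxy : (x, y) ∈ A.graph)
    (hS_eq : ∀ τ, 0 ≤ τ → S τ x = x + ∫ s in (0:ℝ)..τ, g α (τ - s) • S s y)
    {a b t : ℝ} (hab : a ≤ b) (hbt : b ≤ t) :
    ((∫ s in a..b, s • Pa α S (t - s) x),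
      a • S (t - a) x - b • S (t - b) x + ∫ s in a..b, S (t - s) x) ∈ A.graph := by
  have hIcc : Icc (t - b) (t - a) ⊆ Ici 0 := fun τ hτ => mem_Ici.2 (by linarith [hτ.1])
  rw [← integral_smul_comp_sub_eq hab ((hS x).mono hIcc)
    (fun τ hτ => hasDerivAt_of_eq_add_integral hα hS hS_eq (by linarith [hτ.1]))
    ((continuousOn_Pa hα hS y).mono hIcc)]
  have hint : ∀ z, IntervalIntegrable (fun s => s • Pa α S (t - s) z) volume a b := fun z =>
    (continuousOn_id.smul ((continuousOn_Pa hα hS z).comp_const_sub hab hbt)).intervalIntegrable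
  refine A.intervalIntegral_mem_graph hA (hint x) (hint y) fun s hs => ?_
  rw [uIoc_of_le hab] at hs
  exact A.graph.smul_of_tower_mem s (Pa_mem_graph hα hS hA hSA hxy (by linarith [hs.2]))

end ResolventFamily

theorem stmt_2_general
    {X : Type*} [NormedAddCommGroup X] [NormedSpace ℂ X] [CompleteSpace X]
    (α : ℝ) (hα1 : 1 < α)
    (A : X →ₗ.[ℂ] X) (hA_closed : IsClosed (A.graph : Set (X × X)))
    (hA_dense : Dense (A.domain : Set X))
    (S : ℝ → X →L[ℂ] X)
    (hS_cont : ∀ x : X, ContinuousOn (fun t => S t x) (Ici (0:ℝ)))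
    (hS_comm : ∀ t : ℝ, 0 ≤ t → ∀ x y : X, (x, y) ∈ A.graph → (S t x, S t y) ∈ A.graph)
    (hS_eq : ∀ t : ℝ, 0 ≤ t → ∀ x y : X, (x, y) ∈ A.graph →
      S t x = x + ∫ s in (0:ℝ)..t, g α (t - s) • S s y)
    :
    ∀ (x : X) (a b t : ℝ), 0 ≤ a → a ≤ b → b ≤ t →
      ((∫ s in a..b, s • Pa α S (t - s) x),
        a • S (t - a) x - b • S (t - b) x + ∫ s in a..b, S (t - s) x) ∈ A.graph := by
  intro x a b t _ hab hbt
  set Φ : X → X × X := fun z => ((∫ s in a..b, s • Pa α S (t - s) z),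
    a • S (t - a) z - b • S (t - b) z + ∫ s in a..b, S (t - s) z)
  have hΦ : Continuous Φ := by
    have := continuous_integral_apply_comp_sub hS_cont hab hbt
    exact (continuous_integral_smul_Pa hα1 hS_cont hab hbt).prodMk (by fun_prop)
  have hdomain : (A.domain : Set X) ⊆ Φ ⁻¹' A.graph := fun z hz =>
    integral_smul_Pa_mem_graph hα1 hS_cont hA_closed hS_comm (A.mem_graph ⟨z, hz⟩)
      (fun τ hτ => hS_eq τ hτ z _ (A.mem_graph ⟨z, hz⟩)) hab hbt
  exact closure_minimal hdomain (hA_closed.preimage hΦ) (hA_dense x)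

theorem stmt_2
    {X : Type*} [NormedAddCommGroup X] [NormedSpace ℂ X] [CompleteSpace X]
    (α : ℝ) (hα1 : 1 < α) (hα2 : α < 2)
    (A : X →ₗ.[ℂ] X) (hA_closed : IsClosed (A.graph : Set (X × X)))
    (hA_dense : Dense (A.domain : Set X))
    (S : ℝ → X →L[ℂ] X)
    (hS_cont : ∀ x : X, ContinuousOn (fun t => S t x) (Ici (0:ℝ)))
    (hS_zero : S 0 = 1)
    (hS_dom : ∀ t : ℝ, 0 ≤ t → ∀ x ∈ A.domain, S t x ∈ A.domain)
    (hS_comm : ∀ t : ℝ, 0 ≤ t → ∀ x y : X, (x, y) ∈ A.graph → (S t x, S t y) ∈ A.graph)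
    (hS_eq : ∀ t : ℝ, 0 ≤ t → ∀ x y : X, (x, y) ∈ A.graph →
      S t x = x + ∫ s in (0:ℝ)..t, g α (t - s) • S s y)
    :
    ∀ (x : X) (a b t : ℝ), 0 ≤ a → a ≤ b → b ≤ t →
      ((∫ s in a..b, s • Pa α S (t - s) x),
        a • S (t - a) x - b • S (t - b) x + ∫ s in a..b, S (t - s) x) ∈ A.graph :=
  stmt_2_general α hα1 A hA_closed hA_dense S hS_cont hS_comm hS_eq
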